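/- Let X be a Banach space with an unconditional basis (e_i), and let Y = [y_n], Z = [z_n] be block subspaces satisfying: (D1) min(supp y_{n+1} ∪ supp z_{n+1}) ≥ max(supp y_n ∪ supp z_n) for all n, and (D2) inf{‖y − z‖ : y ∈ Y, z ∈ Z, ‖y‖ = ‖z‖ = 1} > 0. Let P_Y: Y + Z → Y be the bounded projection y + z ↦ y. Then P_Y = D|_{Y+Z} + S with D: X → X a bounded diagonal operator and S strictly singular if and only if there exists a partition ℕ = F ∪ G such that the coordinate projections P_G|_Y and P_F|_Z are strictly singular. Moreover, in that case D may be chosen to be the coordinate projection P_F. -/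

import Mathlib

open scoped BigOperators Classical
open Filter Topology

structure SchauderBasis' (X : Type*) [NormedAddCommGroup X] [NormedSpace ℝ X] where
  e : ℕ → X
  coord : ℕ → X →L[ℝ] ℝ
  ortho : ∀ i j, coord i (e j) = if i = j then 1 else 0
  expansion : ∀ x : X, HasSum (fun i => coord i x • e i) x

section Defs

variable {X : Type*} [NormedAddCommGroup X] [NormedSpace ℝ X]

def SchauderBasis'.IsUnconditionalWith (b : SchauderBasis' X) (C : ℝ) : Prop :=
  ∀ x y : X, (∀ i, |b.coord i y| ≤ |b.coord i x|) → ‖y‖ ≤ C * ‖x‖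

def SchauderBasis'.supp (b : SchauderBasis' X) (x : X) : Set ℕ := {i | b.coord i x ≠ 0}

def StrictlySingular {E F : Type*} [NormedAddCommGroup E] [NormedSpace ℝ E]
    [NormedAddCommGroup F] [NormedSpace ℝ F] (T : E →L[ℝ] F) : Prop :=
  ∀ Y : Submodule ℝ E, ¬ FiniteDimensional ℝ Y →
    ¬ ∃ c : ℝ, 0 < c ∧ ∀ y ∈ Y, c * ‖y‖ ≤ ‖T y‖

def SchauderBasis'.TightBySupport (b : SchauderBasis' X) : Prop :=
  ∀ Y Z : Submodule ℝ X, IsClosed (Y : Set X) → IsClosed (Z : Set X) →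
    ¬ FiniteDimensional ℝ Y → ¬ FiniteDimensional ℝ Z →
    (∀ y ∈ Y, ∀ z ∈ Z, ∀ i, b.coord i y ≠ 0 → b.coord i z = 0) →
    IsEmpty (Y ≃L[ℝ] Z)

def SchauderBasis'.IsBlockSequence (b : SchauderBasis' X) (x : ℕ → X) : Prop :=
  (∀ n, x n ≠ 0) ∧ (∀ n, (b.supp (x n)).Finite) ∧
    ∀ m n i j, m < n → b.coord i (x m) ≠ 0 → b.coord j (x n) ≠ 0 → i < j

def closedSpan (x : ℕ → X) : Submodule ℝ X :=
  (Submodule.span ℝ (Set.range x)).topologicalClosure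

def SchauderBasis'.IsDiagonal (b : SchauderBasis' X) (D : X →L[ℝ] X) : Prop :=
  ∀ i, ∃ lam : ℝ, D (b.e i) = lam • b.e i

def IsL1Average (b : SchauderBasis' X) (x : X) (n : ℕ) (c : ℝ) : Prop :=
  0 < n ∧ 1 ≤ c ∧ ∃ xs : Fin n → X,
    (∀ i, ‖xs i‖ ≤ 1) ∧
    (∀ i j : Fin n, i < j → ∀ p q, b.coord p (xs i) ≠ 0 → b.coord q (xs j) ≠ 0 → p < q) ∧
    x = (n : ℝ)⁻¹ • ∑ i, xs i ∧ 1 / c ≤ ‖x‖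

end Defs

/-!
If `Q = D + S` with `D` diagonal with eigenvalues `λ i`, split `ℕ` into `F = {|λ i| ≥ 1/2}` and
`G = {|λ i| < 1/2}`. On `Y` one has `S = Id - D`, and unconditionality gives
`‖P_G u‖ ≤ 2C ‖S u‖`; on `Z` one has `S = -D` and `‖P_F v‖ ≤ 2C ‖S v‖`. Hence both restrictions
are strictly singular. Conversely, for `w = u + v` we have `Q w - P_F w = P_G u - P_F v`, a
difference of strictly singular operators.

Strictly singular operators are closed under subtraction because such an operator has norm at
most `ε` on some infinite-dimensional subspace of any given one: pick unit vectors `x n` with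
`‖T (x n)‖ ≤ ε 4⁻ⁿ / 2` together with norming functionals `f n` such that `f m (x n) = 0` for
`m < n`. This triangularity bounds the `n`-th coefficient of a combination of the `x i` by `2ⁿ`
times its norm, so `T` has norm at most `ε` on the span.
-/

theorem Submodule.not_finiteDimensional_inf_ker {K V W : Type*} [DivisionRing K]
    [AddCommGroup V] [Module K V] [AddCommGroup W] [Module K W] [FiniteDimensional K W]
    {M : Submodule K V} (hM : ¬ FiniteDimensional K M) (f : V →ₗ[K] W) :
    ¬ FiniteDimensional K ↥(M ⊓ LinearMap.ker f) := by
  simp only [← Submodule.fg_iff_finiteDimensional] at hM ⊢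
  exact fun h => hM (Submodule.fg_of_fg_map_of_fg_inf_ker f (IsNoetherian.noetherian _) h)

section

variable {E F G : Type*} [NormedAddCommGroup E] [NormedSpace ℝ E]
  [NormedAddCommGroup F] [NormedSpace ℝ F] [NormedAddCommGroup G] [NormedSpace ℝ G]

theorem abs_le_two_pow_mul_norm_linearCombination {x : ℕ → E} {f : ℕ → StrongDual ℝ E}
    (hx : ∀ n, ‖x n‖ ≤ 1) (hf : ∀ n, ‖f n‖ ≤ 1) (hfx : ∀ n, f n (x n) = 1)
    (htri : ∀ m n, m < n → f m (x n) = 0) (c : ℕ →₀ ℝ) (n : ℕ) :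
    |c n| ≤ 2 ^ n * ‖Finsupp.linearCombination ℝ x c‖ := by
  obtain ⟨v, hv⟩ : ∃ v, Finsupp.linearCombination ℝ x c = v := ⟨_, rfl⟩
  rw [hv]
  induction n using Nat.strong_induction_on with
  | _ n ih =>
  have hfv : f n v = c n + ∑ i ∈ Finset.range n, c i * f n (x i) := by
    have hsub : c.support ⊆ c.support ∪ Finset.range (n + 1) := Finset.subset_union_left
    rw [← hv, Finsupp.linearCombination_apply, map_finsuppSum,
      Finsupp.sum_of_support_subset c hsub _ (fun _ _ => by simp),
      ← Finset.sum_subset Finset.subset_union_right, Finset.sum_range_succ, add_comm]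
    · simp [hfx]
    · intro i _ hi
      rw [map_smul, htri n i (by simpa using hi), smul_zero]
  have hterm : ∀ i ∈ Finset.range n, |c i * f n (x i)| ≤ 2 ^ i * ‖v‖ := fun i hi => by
    have hfxi : |f n (x i)| ≤ 1 := by
      simpa using ((f n).le_opNorm (x i)).trans (mul_le_one₀ (hf n) (norm_nonneg _) (hx i))
    rw [abs_mul]
    exact (mul_le_mul (ih i (Finset.mem_range.1 hi)) hfxi (abs_nonneg _) (by positivity)).trans_eq
      (mul_one _)
  have hgeom : ∑ i ∈ Finset.range n, (2 : ℝ) ^ i = 2 ^ n - 1 := by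
    rw [geom_sum_eq (by norm_num)]; norm_num
  calc |c n| = |f n v - ∑ i ∈ Finset.range n, c i * f n (x i)| := by
        rw [hfv, add_sub_cancel_right]
    _ ≤ |f n v| + ∑ i ∈ Finset.range n, |c i * f n (x i)| :=
      (abs_sub _ _).trans (add_le_add le_rfl (Finset.abs_sum_le_sum_abs _ _))
    _ ≤ ‖v‖ + ∑ i ∈ Finset.range n, 2 ^ i * ‖v‖ := by
      gcongr with i hi
      · simpa using ((f n).le_opNorm v).trans (mul_le_of_le_one_left (norm_nonneg _) (hf n))
      · exact hterm i hi
    _ = 2 ^ n * ‖v‖ := by rw [← Finset.sum_mul, hgeom]; ring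

namespace StrictlySingular

variable {T : E →L[ℝ] F} {M : Submodule ℝ E}

theorem exists_norm_eq_one_le (hT : StrictlySingular T) (hM : ¬ FiniteDimensional ℝ M)
    {δ : ℝ} (hδ : 0 < δ) : ∃ x ∈ M, ‖x‖ = 1 ∧ ‖T x‖ ≤ δ := by
  obtain ⟨y, hyM, hy⟩ : ∃ y ∈ M, ‖T y‖ < δ * ‖y‖ := by
    by_contra! h
    exact hT M hM ⟨δ, hδ, h⟩
  have hy0 : 0 < ‖y‖ := by
    by_contra! h
    simp [norm_le_zero_iff.1 h] at hy
  refine ⟨‖y‖⁻¹ • y, M.smul_mem _ hyM, by simp [norm_smul, hy0.ne'], ?_⟩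
  rw [map_smul, norm_smul, norm_inv, norm_norm, inv_mul_le_iff₀ hy0]
  linarith

theorem exists_triangular_seq (hT : StrictlySingular T) (hM : ¬ FiniteDimensional ℝ M)
    {δ : ℕ → ℝ} (hδ : ∀ n, 0 < δ n) (hδ_anti : Antitone δ) :
    ∃ (x : ℕ → E) (f : ℕ → StrongDual ℝ E), (∀ n, x n ∈ M) ∧ (∀ n, ‖x n‖ = 1) ∧
      (∀ n, ‖f n‖ = 1) ∧ (∀ n, f n (x n) = 1) ∧ (∀ m n, m < n → f m (x n) = 0) ∧
      ∀ n, ‖T (x n)‖ ≤ δ n := by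
  -- A triple `(k, x, f)` carries a level `k` with `‖T x‖ ≤ δ k`; levels strictly increase, and
  -- each new `x` lies in the common kernel of the functionals chosen so far.
  let Good : ℕ × E × StrongDual ℝ E → Prop := fun p =>
    p.2.1 ∈ M ∧ ‖p.2.1‖ = 1 ∧ ‖p.2.2‖ = 1 ∧ p.2.2 p.2.1 = 1 ∧ ‖T p.2.1‖ ≤ δ p.1
  let Later : ℕ × E × StrongDual ℝ E → ℕ × E × StrongDual ℝ E → Prop := fun p q =>
    p.1 < q.1 ∧ p.2.2 q.2.1 = 0
  obtain ⟨p, hp, hpq⟩ := exists_seq_of_forall_finset_exists Good Later fun s _ => by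
    let common : E →ₗ[ℝ] (s → ℝ) := LinearMap.pi fun q => (q.1.2.2 : E →ₗ[ℝ] ℝ)
    obtain ⟨x, hx, hx1, hTx⟩ := hT.exists_norm_eq_one_le
      (Submodule.not_finiteDimensional_inf_ker hM common) (hδ (s.sup Prod.fst + 1))
    obtain ⟨f, hf1, hfx⟩ := exists_dual_vector ℝ x (by simp [hx1])
    refine ⟨(s.sup Prod.fst + 1, x, f), ⟨hx.1, hx1, hf1, by simp [hfx, hx1], hTx⟩,
      fun q hq => ⟨Nat.lt_succ_of_le (Finset.le_sup hq), ?_⟩⟩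
    simpa [common] using congrFun (LinearMap.mem_ker.1 hx.2) ⟨q, hq⟩
  have hlevel : ∀ n, n ≤ (p n).1 :=
    StrictMono.id_le (strictMono_nat_of_lt_succ fun n => (hpq n (n + 1) n.lt_succ_self).1)
  exact ⟨fun n => (p n).2.1, fun n => (p n).2.2, fun n => (hp n).1, fun n => (hp n).2.1,
    fun n => (hp n).2.2.1, fun n => (hp n).2.2.2.1, fun m n h => (hpq m n h).2,
    fun n => (hp n).2.2.2.2.trans (hδ_anti (hlevel n))⟩

theorem exists_le_norm_le_mul (hT : StrictlySingular T) (hM : ¬ FiniteDimensional ℝ M)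
    {ε : ℝ} (hε : 0 < ε) :
    ∃ N ≤ M, ¬ FiniteDimensional ℝ N ∧ ∀ x ∈ N, ‖T x‖ ≤ ε * ‖x‖ := by
  obtain ⟨x, f, hxM, hx, hf, hfx, htri, hTx⟩ := hT.exists_triangular_seq hM
    (δ := fun n => ε / 2 * (1 / 4) ^ n) (fun n => by positivity)
    (fun m n h => mul_le_mul_of_nonneg_left (pow_le_pow_of_le_one (by norm_num) (by norm_num) h)
      (by positivity))
  have hcoeff := abs_le_two_pow_mul_norm_linearCombination (fun n => (hx n).le)
    (fun n => (hf n).le) hfx htri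
  have hli : LinearIndependent ℝ x := linearIndependent_iff.2 fun c hc => by
    ext n
    simpa [hc] using hcoeff c n
  refine ⟨Submodule.span ℝ (Set.range x), Submodule.span_le.2 (Set.range_subset_iff.2 hxM),
    fun _ => Module.Finite.not_linearIndependent_of_infinite _ (linearIndependent_span hli), ?_⟩
  intro v hv
  rw [← Finsupp.range_linearCombination] at hv
  obtain ⟨c, rfl⟩ := hv
  set v := Finsupp.linearCombination ℝ x c
  calc ‖T v‖ = ‖∑ i ∈ c.support, c i • T (x i)‖ := by
        simp [v, Finsupp.linearCombination_apply, Finsupp.sum]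
    _ ≤ ∑ i ∈ c.support, (2 ^ i * ‖v‖) * (ε / 2 * (1 / 4) ^ i) := by
        refine (norm_sum_le _ _).trans (Finset.sum_le_sum fun i _ => ?_)
        rw [norm_smul, Real.norm_eq_abs]
        exact mul_le_mul (hcoeff c i) (hTx i) (norm_nonneg _) (by positivity)
    _ = ε / 2 * ‖v‖ * ∑ i ∈ c.support, (1 / 2 : ℝ) ^ i := by
        rw [Finset.mul_sum]
        refine Finset.sum_congr rfl fun i _ => ?_
        rw [show (1 / 2 : ℝ) ^ i = 2 ^ i * (1 / 4) ^ i by rw [← mul_pow]; norm_num]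
        ring
    _ ≤ ε / 2 * ‖v‖ * 2 := by
        gcongr
        calc ∑ i ∈ c.support, (1 / 2 : ℝ) ^ i ≤ ∑' i, (1 / 2 : ℝ) ^ i :=
              Summable.sum_le_tsum _ (fun _ _ => by positivity) summable_geometric_two
          _ = 2 := tsum_geometric_two
    _ = ε * ‖v‖ := by ring

theorem sub {A B : E →L[ℝ] F} (hA : StrictlySingular A) (hB : StrictlySingular B) :
    StrictlySingular (A - B) := by
  rintro W hW ⟨c, hc, hlow⟩
  obtain ⟨N, hNW, hN, hAN⟩ := hA.exists_le_norm_le_mul hW (half_pos hc)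
  refine hB N hN ⟨c / 2, half_pos hc, fun x hx => ?_⟩
  have h1 := hlow x (hNW hx)
  have h2 := hAN x hx
  have h3 : ‖(A - B) x‖ ≤ ‖A x‖ + ‖B x‖ := norm_sub_le _ _
  linarith

theorem comp (hT : StrictlySingular T) (R : G →L[ℝ] E) : StrictlySingular (T.comp R) := by
  rintro W hW ⟨c, hc, hlow⟩
  have hdisj : Disjoint W (LinearMap.ker (R : G →ₗ[ℝ] E)) := by
    refine Submodule.disjoint_def.2 fun x hxW hxR => norm_le_zero_iff.1 ?_
    have := hlow x hxW
    simp only [ContinuousLinearMap.comp_apply] at this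
    rw [show R x = 0 from hxR, map_zero, norm_zero] at this
    exact nonpos_of_mul_nonpos_right this hc
  refine hT (W.map (R : G →ₗ[ℝ] E)) (fun h => hW ?_) ⟨c / (‖R‖ + 1), by positivity, ?_⟩
  · rw [← LinearMap.range_domRestrict] at h
    exact (LinearEquiv.ofInjective _
      (LinearMap.injective_domRestrict_iff.2 hdisj)).symm.finiteDimensional
  · rintro _ ⟨x, hxW, rfl⟩
    have hTRx : c * ‖x‖ ≤ ‖T (R x)‖ := hlow x hxW
    have hRx : ‖R x‖ ≤ (‖R‖ + 1) * ‖x‖ :=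
      (R.le_opNorm x).trans (by gcongr; linarith)
    rw [div_mul_eq_mul_div, div_le_iff₀ (by positivity)]
    calc c * ‖R x‖ ≤ c * ((‖R‖ + 1) * ‖x‖) := by gcongr
      _ ≤ ‖T (R x)‖ * (‖R‖ + 1) := by nlinarith [norm_nonneg R]

theorem of_norm_le {U : E →L[ℝ] G} (hU : StrictlySingular U) {K : ℝ}
    (h : ∀ x, ‖T x‖ ≤ K * ‖U x‖) : StrictlySingular T := by
  rintro W hW ⟨c, hc, hlow⟩
  refine hU W hW ⟨c / (|K| + 1), by positivity, fun x hx => ?_⟩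
  rw [div_mul_eq_mul_div, div_le_iff₀ (by positivity)]
  calc c * ‖x‖ ≤ K * ‖U x‖ := (hlow x hx).trans (h x)
    _ ≤ ‖U x‖ * (|K| + 1) := by nlinarith [le_abs_self K, norm_nonneg (U x)]

end StrictlySingular

theorem strictlySingular_comp_subtypeL_of_norm_le {W V : Submodule ℝ E} (hWV : W ≤ V)
    {S : V →L[ℝ] F} (hS : StrictlySingular S) {T : E →L[ℝ] G} {K : ℝ}
    (h : ∀ u (hu : u ∈ W), ‖T u‖ ≤ K * ‖S ⟨u, hWV hu⟩‖) :
    StrictlySingular (T.comp W.subtypeL) :=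
  (hS.comp (W.subtypeL.codRestrict V fun u => hWV u.2)).of_norm_le fun u => h u u.2

end

namespace SchauderBasis'

variable {X : Type*} [NormedAddCommGroup X] [NormedSpace ℝ X] (b : SchauderBasis' X)

theorem ext_coord {u v : X} (h : ∀ i, b.coord i u = b.coord i v) : u = v := by
  have hv := b.expansion v
  simp only [← h] at hv
  exact (b.expansion u).unique hv

theorem coord_apply_eq_mul {D : X →L[ℝ] X} {lam : ℕ → ℝ}
    (hD : ∀ i, D (b.e i) = lam i • b.e i) (x : X) (j : ℕ) :
    b.coord j (D x) = lam j * b.coord j x := by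
  have h := ((b.expansion x).mapL D).mapL (b.coord j)
  simp only [ContinuousLinearMap.map_smul, hD, smul_eq_mul, b.ortho] at h
  refine h.unique ?_
  convert hasSum_ite_eq j (lam j * b.coord j x) using 1
  ext i
  split_ifs with h1 h2 h2 <;> subst_vars <;> simp_all [mul_comm]

variable {b} in
theorem IsUnconditionalWith.norm_le_mul {C : ℝ} (hb : b.IsUnconditionalWith C) {K : ℝ}
    (hK : 0 ≤ K) {u w : X} (h : ∀ i, |b.coord i u| ≤ K * |b.coord i w|) :
    ‖u‖ ≤ C * K * ‖w‖ := by
  have := hb (K • w) u fun i => by simpa [abs_mul, abs_of_nonneg hK] using h i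
  rwa [norm_smul, Real.norm_of_nonneg hK, ← mul_assoc] at this

variable {P : Set ℕ → X →L[ℝ] X}
  (hP : ∀ (G : Set ℕ) (x : X) (i : ℕ), b.coord i (P G x) = if i ∈ G then b.coord i x else 0)
include hP

theorem coordProj_add_coordProj {F G : Set ℕ} (hFG : F ∪ G = Set.univ) (hdisj : F ∩ G = ∅)
    (x : X) : P F x + P G x = x := by
  refine b.ext_coord fun i => ?_
  have hG : i ∈ G ↔ i ∉ F := ⟨fun hG hF => (hdisj ▸ ⟨hF, hG⟩ : i ∈ (∅ : Set ℕ)),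
    fun hF => ((hFG ▸ Set.mem_univ i : i ∈ F ∪ G)).resolve_left hF⟩
  rw [map_add, hP, hP, hG]
  split_ifs <;> simp

theorem isDiagonal_coordProj (F : Set ℕ) : b.IsDiagonal (P F) := fun i =>
  ⟨if i ∈ F then 1 else 0, b.ext_coord fun j => by
    rw [hP, map_smul, b.ortho, smul_eq_mul]
    by_cases hji : j = i <;> simp [hji]⟩

end SchauderBasis'

section Decomposition

variable {X : Type*} [NormedAddCommGroup X] [NormedSpace ℝ X] {b : SchauderBasis' X}
  {P : Set ℕ → X →L[ℝ] X}
  (hP : ∀ (G : Set ℕ) (x : X) (i : ℕ), b.coord i (P G x) = if i ∈ G then b.coord i x else 0)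
  {Y Z : Submodule ℝ X} {Q : ↥(Y ⊔ Z) →L[ℝ] X}
  (hQ : ∀ w : ↥(Y ⊔ Z), ∀ u ∈ Y, ∀ v ∈ Z, (w : X) = u + v → Q w = u)
include hQ

theorem apply_mem_left_and_sub_mem_right (w : ↥(Y ⊔ Z)) : Q w ∈ Y ∧ (w : X) - Q w ∈ Z := by
  obtain ⟨u, hu, v, hv, huv⟩ := Submodule.mem_sup.1 w.2
  rw [hQ w u hu v hv huv.symm, ← huv, add_sub_cancel_left]
  exact ⟨hu, hv⟩

include hP

theorem exists_strictlySingular_eq_coordProj_comp_add {F G : Set ℕ} (hFG : F ∪ G = Set.univ)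
    (hdisj : F ∩ G = ∅) (hY : StrictlySingular ((P G).comp Y.subtypeL))
    (hZ : StrictlySingular ((P F).comp Z.subtypeL)) :
    ∃ S : ↥(Y ⊔ Z) →L[ℝ] X, StrictlySingular S ∧ Q = (P F).comp (Y ⊔ Z).subtypeL + S := by
  have hmem := apply_mem_left_and_sub_mem_right hQ
  let QY : ↥(Y ⊔ Z) →L[ℝ] Y := Q.codRestrict Y fun w => (hmem w).1
  let QZ : ↥(Y ⊔ Z) →L[ℝ] Z := ((Y ⊔ Z).subtypeL - Q).codRestrict Z fun w => (hmem w).2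
  refine ⟨((P G).comp Y.subtypeL).comp QY - ((P F).comp Z.subtypeL).comp QZ,
    (hY.comp QY).sub (hZ.comp QZ), ?_⟩
  ext w
  have hsplit := b.coordProj_add_coordProj hP hFG hdisj (Q w)
  change Q w = P F w + (P G (Q w) - P F (w - Q w))
  rw [map_sub]
  nth_rw 1 [← hsplit]
  abel

theorem exists_partition_of_eq_diagonal_comp_add {C : ℝ} (hb : b.IsUnconditionalWith C)
    {D : X →L[ℝ] X} {S : ↥(Y ⊔ Z) →L[ℝ] X} (hD : b.IsDiagonal D) (hS : StrictlySingular S)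
    (hQS : Q = D.comp (Y ⊔ Z).subtypeL + S) :
    ∃ F G : Set ℕ, F ∪ G = Set.univ ∧ F ∩ G = ∅ ∧
      StrictlySingular ((P G).comp Y.subtypeL) ∧ StrictlySingular ((P F).comp Z.subtypeL) := by
  choose lam hlam using hD
  have hDc := b.coord_apply_eq_mul hlam
  have hS_apply : ∀ w, S w = Q w - D w := fun w => by rw [hQS]; simp
  let F := {i | 1 / 2 ≤ |lam i|}
  refine ⟨F, Fᶜ, Set.union_compl_self F, Set.inter_compl_self F, ?_, ?_⟩
  · refine strictlySingular_comp_subtypeL_of_norm_le le_sup_left hS (K := C * 2) fun u hu => ?_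
    rw [hS_apply, hQ _ u hu 0 Z.zero_mem (add_zero u).symm]
    refine hb.norm_le_mul (by norm_num) fun i => ?_
    rw [hP, map_sub, hDc, ← one_sub_mul, abs_mul]
    split_ifs with hi
    · have hlam : |lam i| < 1 / 2 := not_le.1 hi
      have h1 : 1 - |lam i| ≤ |1 - lam i| := by simpa using abs_sub_abs_le_abs_sub 1 (lam i)
      nlinarith [abs_nonneg (b.coord i u)]
    · simp only [abs_zero]
      positivity
  · refine strictlySingular_comp_subtypeL_of_norm_le le_sup_right hS (K := C * 2) fun v hv => ?_
    rw [hS_apply, hQ _ 0 Y.zero_mem v hv (zero_add v).symm]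
    refine hb.norm_le_mul (by norm_num) fun i => ?_
    rw [hP, map_sub, map_zero, zero_sub, abs_neg, hDc, abs_mul]
    split_ifs with hi
    · have hlam : 1 / 2 ≤ |lam i| := hi
      nlinarith [abs_nonneg (b.coord i v)]
    · simp only [abs_zero]
      positivity

end Decomposition

theorem stmt7_general {X : Type*} [NormedAddCommGroup X] [NormedSpace ℝ X]
    (b : SchauderBasis' X) (C : ℝ) (hb : b.IsUnconditionalWith C)
    (P : Set ℕ → (X →L[ℝ] X))
    (hP : ∀ (G : Set ℕ) (x : X) (i : ℕ),
      b.coord i (P G x) = if i ∈ G then b.coord i x else 0)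
    (y z : ℕ → X)
    (Q : ↥(closedSpan y ⊔ closedSpan z) →L[ℝ] X)
    (hQ : ∀ w : ↥(closedSpan y ⊔ closedSpan z), ∀ u ∈ closedSpan y, ∀ v ∈ closedSpan z,
      (w : X) = u + v → Q w = u) :
    ((∃ (D : X →L[ℝ] X) (S : ↥(closedSpan y ⊔ closedSpan z) →L[ℝ] X),
        b.IsDiagonal D ∧ StrictlySingular S ∧
        Q = D.comp (closedSpan y ⊔ closedSpan z).subtypeL + S) ↔
      (∃ F G : Set ℕ, F ∪ G = Set.univ ∧ F ∩ G = ∅ ∧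
        StrictlySingular ((P G).comp (closedSpan y).subtypeL) ∧
        StrictlySingular ((P F).comp (closedSpan z).subtypeL)))
    ∧ (∀ F G : Set ℕ, F ∪ G = Set.univ → F ∩ G = ∅ →
        StrictlySingular ((P G).comp (closedSpan y).subtypeL) →
        StrictlySingular ((P F).comp (closedSpan z).subtypeL) →
        ∃ S : ↥(closedSpan y ⊔ closedSpan z) →L[ℝ] X, StrictlySingular S ∧
          Q = (P F).comp (closedSpan y ⊔ closedSpan z).subtypeL + S) := by
  have moreover := fun F G => exists_strictlySingular_eq_coordProj_comp_add hP hQ (F := F) (G := G)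
  refine ⟨⟨fun ⟨D, S, hD, hS, hQS⟩ => exists_partition_of_eq_diagonal_comp_add hP hQ hb hD hS hQS,
    fun ⟨F, G, hFG, hdisj, hY, hZ⟩ => ?_⟩, moreover⟩
  obtain ⟨S, hS, hQS⟩ := moreover F G hFG hdisj hY hZ
  exact ⟨P F, S, b.isDiagonal_coordProj hP F, hS, hQS⟩

/-- characterization of when the projection P_Y on Y + Z is a
strictly singular perturbation of a restriction of a diagonal operator, in
terms of a partition ℕ = F ∪ G with P_G|_Y and P_F|_Z strictly singular;
moreover D can then be chosen to be the coordinate projection P_F. -/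
theorem stmt7 {X : Type*} [NormedAddCommGroup X] [NormedSpace ℝ X] [CompleteSpace X]
    (b : SchauderBasis' X) (C : ℝ) (hb : b.IsUnconditionalWith C)
    (P : Set ℕ → (X →L[ℝ] X))
    (hP : ∀ (G : Set ℕ) (x : X) (i : ℕ),
      b.coord i (P G x) = if i ∈ G then b.coord i x else 0)
    (y z : ℕ → X) (hy : b.IsBlockSequence y) (hz : b.IsBlockSequence z)
    (hD1 : ∀ n i j, (b.coord i (y n) ≠ 0 ∨ b.coord i (z n) ≠ 0) →
      (b.coord j (y (n + 1)) ≠ 0 ∨ b.coord j (z (n + 1)) ≠ 0) → i ≤ j)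
    (hD2 : ∃ δ > (0 : ℝ), ∀ u ∈ closedSpan y, ∀ v ∈ closedSpan z,
      ‖u‖ = 1 → ‖v‖ = 1 → δ ≤ ‖u - v‖)
    (Q : ↥(closedSpan y ⊔ closedSpan z) →L[ℝ] X)
    (hQ : ∀ w : ↥(closedSpan y ⊔ closedSpan z), ∀ u ∈ closedSpan y, ∀ v ∈ closedSpan z,
      (w : X) = u + v → Q w = u) :
    ((∃ (D : X →L[ℝ] X) (S : ↥(closedSpan y ⊔ closedSpan z) →L[ℝ] X),
        b.IsDiagonal D ∧ StrictlySingular S ∧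
        Q = D.comp (closedSpan y ⊔ closedSpan z).subtypeL + S) ↔
      (∃ F G : Set ℕ, F ∪ G = Set.univ ∧ F ∩ G = ∅ ∧
        StrictlySingular ((P G).comp (closedSpan y).subtypeL) ∧
        StrictlySingular ((P F).comp (closedSpan z).subtypeL)))
    ∧ (∀ F G : Set ℕ, F ∪ G = Set.univ → F ∩ G = ∅ →
        StrictlySingular ((P G).comp (closedSpan y).subtypeL) →
        StrictlySingular ((P F).comp (closedSpan z).subtypeL) →
        ∃ S : ↥(closedSpan y ⊔ closedSpan z) →L[ℝ] X, StrictlySingular S ∧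
          Q = (P F).comp (closedSpan y ⊔ closedSpan z).subtypeL + S) :=
  stmt7_general b C hb P hP y z Q hQ
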